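/- arXiv:1303.4075 — 2 statements merged into one kernel-verified Lean document; each statement's English description precedes it below -/
import Mathlib

section
/- Let a < b, let n ∈ ℕ with n ≥ 2, and let α : Δ → ℝ be a measurable function with 1/n < α(t,τ) < 1 for all (t,τ) ∈ Δ, where Δ = {(t,τ) ∈ ℝ² : a ≤ τ < t ≤ b}. Then the double integral ∫ₐᵇ ( ∫ₐᵗ (t−τ)^{α(t,τ)−1}/Γ(α(t,τ)) dτ ) dt is finite. -/
/-!
On `Δ` the order satisfies `1/n ≤ α < 1`, and `Γ ≥ 1` on `(0, 1]` because `Γ` decreases there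
from `Γ 1 = 1`. Hence, with `p = 1/n`, the kernel is dominated by `(t - τ)^(p-1) + 1`
(split at `t - τ = 1`), whose integral over `τ ∈ (a, t)` is at most the finite quantity
`∫₀^{b-a} (s^(p-1) + 1) ds`, uniformly in `t`. The outer integral is then over a bounded interval.
-/

open MeasureTheory Real Set

lemma Real.one_le_Gamma_of_pos_of_le_one {s : ℝ} (h0 : 0 < s) (h1 : s ≤ 1) : 1 ≤ Gamma s := by
  simpa only [Gamma_one] using
    Gamma_strictAntiOn_Ioc.antitoneOn ⟨h0, h1⟩ ⟨one_pos, le_rfl⟩ h1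

lemma Real.rpow_sub_one_div_Gamma_le {x p β : ℝ} (hx : 0 < x) (hpβ : p ≤ β) (hβ0 : 0 < β)
    (hβ1 : β ≤ 1) : x ^ (β - 1) / Gamma β ≤ x ^ (p - 1) + 1 := by
  have hpow_le : x ^ (β - 1) ≤ x ^ (p - 1) + 1 := by
    rcases le_or_gt x 1 with hx1 | hx1
    · have := rpow_le_rpow_of_exponent_ge hx hx1 (by linarith : p - 1 ≤ β - 1)
      linarith
    · have := rpow_le_one_of_one_le_of_nonpos hx1.le (by linarith : β - 1 ≤ 0)
      linarith [rpow_nonneg hx.le (p - 1)]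
  exact (div_le_self (rpow_nonneg hx.le _) (one_le_Gamma_of_pos_of_le_one hβ0 hβ1)).trans hpow_le

lemma setLIntegral_Ioo_comp_const_sub (f : ℝ → ENNReal) (a t : ℝ) :
    ∫⁻ τ in Ioo a t, f (t - τ) = ∫⁻ s in Ioo 0 (t - a), f s := by
  have hpre : (fun τ => t - τ) ⁻¹' Ioo 0 (t - a) = Ioo a t := by
    simp only [preimage_const_sub_Ioo, sub_sub_cancel, sub_zero]
  rw [← hpre]
  exact (volume.measurePreserving_sub_left t).setLIntegral_comp_preimage_emb
    (Homeomorph.subLeft t).measurableEmbedding f _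

lemma setLIntegral_Ioo_rpow_add_one_lt_top {p : ℝ} (hp : 0 < p) (c : ℝ) :
    ∫⁻ s in Ioo 0 c, ENNReal.ofReal (s ^ (p - 1) + 1) < ⊤ := by
  have hrpow : IntegrableOn (fun s : ℝ => s ^ (p - 1)) (Ioo 0 c) :=
    (intervalIntegral.intervalIntegrable_rpow' (by linarith) (a := 0) (b := c)).1.mono_set
      Ioo_subset_Ioc_self
  exact (hrpow.add (integrableOn_const measure_Ioo_lt_top.ne)).setLIntegral_lt_top

lemma setLIntegral_rpow_sub_one_div_Gamma_le {a t p : ℝ} {β : ℝ → ℝ} (hp : 0 < p)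
    (hβ : ∀ τ ∈ Ioo a t, p ≤ β τ ∧ β τ ≤ 1) :
    ∫⁻ τ in Ioo a t, ENNReal.ofReal ((t - τ) ^ (β τ - 1) / Gamma (β τ))
      ≤ ∫⁻ s in Ioo 0 (t - a), ENNReal.ofReal (s ^ (p - 1) + 1) := by
  rw [← setLIntegral_Ioo_comp_const_sub (fun s => ENNReal.ofReal (s ^ (p - 1) + 1))]
  refine setLIntegral_mono_ae' measurableSet_Ioo (Filter.Eventually.of_forall fun τ hτ => ?_)
  obtain ⟨hpβ, hβ1⟩ := hβ τ hτ
  exact ENNReal.ofReal_le_ofReal <|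
    rpow_sub_one_div_Gamma_le (sub_pos.2 hτ.2) hpβ (hp.trans_le hpβ) hβ1

theorem double_integral_variable_order_kernel_finite_general
    (a b : ℝ) (n : ℕ) (hn : 2 ≤ n)
    (α : ℝ → ℝ → ℝ)
    (hα : ∀ t τ, a ≤ τ → τ < t → t ≤ b → 1 / (n : ℝ) < α t τ ∧ α t τ < 1) :
    (∫⁻ t in Set.Ioc a b, ∫⁻ τ in Set.Ioo a t,
        ENNReal.ofReal ((t - τ) ^ (α t τ - 1) / Real.Gamma (α t τ))) < ⊤ := by
  set p : ℝ := 1 / n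
  have hp : 0 < p := by positivity
  set C := ∫⁻ s in Ioo 0 (b - a), ENNReal.ofReal (s ^ (p - 1) + 1)
  have hinner : ∀ t ∈ Ioc a b, ∫⁻ τ in Ioo a t,
      ENNReal.ofReal ((t - τ) ^ (α t τ - 1) / Gamma (α t τ)) ≤ C := fun t ht =>
    calc _ ≤ ∫⁻ s in Ioo 0 (t - a), ENNReal.ofReal (s ^ (p - 1) + 1) :=
          setLIntegral_rpow_sub_one_div_Gamma_le hp fun τ hτ =>
            (hα t τ hτ.1.le hτ.2 ht.2).imp le_of_lt le_of_lt
      _ ≤ C := lintegral_mono_set (Ioo_subset_Ioo_right (by linarith [ht.2]))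
  calc _ ≤ ∫⁻ _ in Ioc a b, C := setLIntegral_mono_ae' measurableSet_Ioc
          (Filter.Eventually.of_forall hinner)
    _ = C * volume (Ioc a b) := setLIntegral_const _ _
    _ < ⊤ := ENNReal.mul_lt_top (setLIntegral_Ioo_rpow_add_one_lt_top hp _) measure_Ioc_lt_top

/-- For `a < b`, `n ≥ 2` and a measurable `α` with
`1/n < α(t,τ) < 1` on `Δ = {(t,τ) : a ≤ τ < t ≤ b}`, the (nonnegative) double
integral `∫ₐᵇ (∫ₐᵗ (t−τ)^(α(t,τ)−1) / Γ(α(t,τ)) dτ) dt` is finite. -/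
theorem double_integral_variable_order_kernel_finite
    (a b : ℝ) (hab : a < b) (n : ℕ) (hn : 2 ≤ n)
    (α : ℝ → ℝ → ℝ)
    (hαm : Measurable fun p : ℝ × ℝ => α p.1 p.2)
    (hα : ∀ t τ, a ≤ τ → τ < t → t ≤ b → 1 / (n : ℝ) < α t τ ∧ α t τ < 1) :
    (∫⁻ t in Set.Ioc a b, ∫⁻ τ in Set.Ioo a t,
        ENNReal.ofReal ((t - τ) ^ (α t τ - 1) / Real.Gamma (α t τ))) < ⊤ :=
  double_integral_variable_order_kernel_finite_general a b n hn α hα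
end

section
/- (Noether's theorem for variable-order fractional variational problems.) Under the setting of the variable-order fractional variational problem, suppose q satisfies the Euler–Lagrange equation ∂₂L(along q)(t) + Σ_{i=1}^{n} (ₜD^{α_i}_b [∂_{i+2}L along q])(t) + Σ_{i=1}^{n} (ₐD^{β_i}_t [∂_{n+i+2}L along q])(t) = 0 on [a,b], and suppose the invariance identity ∂₂L(along q)(t)·ξ(t,q(t)) + Σ_{i=1}^{n} ∂_{i+2}L(along q)(t)·(ᶜₐD^{α_i}_t [s ↦ ξ(s,q(s))])(t) + Σ_{i=1}^{n} ∂_{n+i+2}L(along q)(t)·(ᶜₜD^{β_i}_b [s ↦ ξ(s,q(s))])(t) = 0 holds on [a,b]. Then for all t ∈ [a,b]: Σ_{i=1}^{n} D^{α_i}_−[ s ↦ ξ(s,q(s)), ∂_{i+2}L along q ](t) + Σ_{i=1}^{n} D^{β_i}_+[ s ↦ ξ(s,q(s)), ∂_{n+i+2}L along q ](t) = 0. -/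
open MeasureTheory Real

/-- `F` is absolutely continuous on `[a, b]`. -/
def AbsolutelyContinuousOn (F : ℝ → ℝ) (a b : ℝ) : Prop :=
  ∃ h : ℝ → ℝ, IntegrableOn h (Set.Icc a b) ∧
    ∀ t ∈ Set.Icc a b, F t = F a + ∫ τ in a..t, h τ

/-- Left Caputo derivative of variable order `γ(·,·)`. -/
noncomputable def caputoLeft (a : ℝ) (γ : ℝ → ℝ → ℝ) (f : ℝ → ℝ) (t : ℝ) : ℝ :=
  ∫ τ in a..t, (t - τ) ^ (-(γ t τ)) / Real.Gamma (1 - γ t τ) * deriv f τ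

/-- Right Caputo derivative of variable order `γ(·,·)`. -/
noncomputable def caputoRight (b : ℝ) (γ : ℝ → ℝ → ℝ) (f : ℝ → ℝ) (t : ℝ) : ℝ :=
  -∫ τ in t..b, (τ - t) ^ (-(γ τ t)) / Real.Gamma (1 - γ τ t) * deriv f τ

/-- Left Riemann–Liouville integral of variable order `1 − γ(·,·)`. -/
noncomputable def leftRLint (a : ℝ) (γ : ℝ → ℝ → ℝ) (g : ℝ → ℝ) (t : ℝ) : ℝ :=
  ∫ τ in a..t, (t - τ) ^ (-(γ t τ)) / Real.Gamma (1 - γ t τ) * g τ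

/-- Right Riemann–Liouville integral of variable order `1 − γ(·,·)`. -/
noncomputable def rightRLint (b : ℝ) (γ : ℝ → ℝ → ℝ) (g : ℝ → ℝ) (t : ℝ) : ℝ :=
  ∫ τ in t..b, (τ - t) ^ (-(γ τ t)) / Real.Gamma (1 - γ τ t) * g τ

/-- Left Riemann–Liouville derivative of variable order `γ(·,·)`. -/
noncomputable def leftRLderiv (a : ℝ) (γ : ℝ → ℝ → ℝ) (g : ℝ → ℝ) (t : ℝ) : ℝ :=
  deriv (leftRLint a γ g) t

/-- Right Riemann–Liouville derivative of variable order `γ(·,·)`. -/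
noncomputable def rightRLderiv (b : ℝ) (γ : ℝ → ℝ → ℝ) (g : ℝ → ℝ) (t : ℝ) : ℝ :=
  -deriv (rightRLint b γ g) t

/-- The operator `D^γ_−[f,g](t) = −f(t)·(ₜD^γ_b g)(t) + g(t)·(ᶜₐD^γ_t f)(t)`. -/
noncomputable def Dminus (a b : ℝ) (γ : ℝ → ℝ → ℝ) (f g : ℝ → ℝ) (t : ℝ) : ℝ :=
  -f t * rightRLderiv b γ g t + g t * caputoLeft a γ f t

/-- The operator `D^γ_+[f,g](t) = −f(t)·(ₐD^γ_t g)(t) + g(t)·(ᶜₜD^γ_b f)(t)`. -/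
noncomputable def Dplus (a b : ℝ) (γ : ℝ → ℝ → ℝ) (f g : ℝ → ℝ) (t : ℝ) : ℝ :=
  -f t * leftRLderiv a γ g t + g t * caputoRight b γ f t

/-!
Multiplying the Euler–Lagrange equation by `Ξ = ξ(·, q(·))` and subtracting it from the
invariance identity cancels the `∂₂L` terms; what remains is, summand by summand, exactly
`D^{α_i}_−[Ξ, ∂_{i+2}L] + D^{β_i}_+[Ξ, ∂_{n+i+2}L]`.
-/

open Finset

theorem sum_Dminus {ι : Type*} (s : Finset ι) (a b : ℝ) (γ : ι → ℝ → ℝ → ℝ) (f : ℝ → ℝ)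
    (g : ι → ℝ → ℝ) (t : ℝ) :
    ∑ i ∈ s, Dminus a b (γ i) f (g i) t
      = -f t * ∑ i ∈ s, rightRLderiv b (γ i) (g i) t
        + ∑ i ∈ s, g i t * caputoLeft a (γ i) f t := by
  simp only [Dminus, sum_add_distrib, mul_sum, neg_mul, sum_neg_distrib]

theorem sum_Dplus {ι : Type*} (s : Finset ι) (a b : ℝ) (γ : ι → ℝ → ℝ → ℝ) (f : ℝ → ℝ)
    (g : ι → ℝ → ℝ) (t : ℝ) :
    ∑ i ∈ s, Dplus a b (γ i) f (g i) t
      = -f t * ∑ i ∈ s, leftRLderiv a (γ i) (g i) t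
        + ∑ i ∈ s, g i t * caputoRight b (γ i) f t := by
  simp only [Dplus, sum_add_distrib, mul_sum, neg_mul, sum_neg_distrib]

theorem noether_variable_order_general
    (a b : ℝ) (n : ℕ)
    (α β : Fin n → ℝ → ℝ → ℝ)
    (Ξ : ℝ → ℝ)
    -- partial derivatives of L along q
    (P₂ : ℝ → ℝ)
    (Pα : Fin n → ℝ → ℝ)
    (Pβ : Fin n → ℝ → ℝ)
    -- the Euler–Lagrange equation along q
    (hEL : ∀ t ∈ Set.Icc a b,
      P₂ t + (∑ i, rightRLderiv b (α i) (Pα i) t)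
           + (∑ i, leftRLderiv a (β i) (Pβ i) t) = 0)
    -- the invariance identity along q
    (hinv : ∀ t ∈ Set.Icc a b,
      P₂ t * Ξ t + (∑ i, Pα i t * caputoLeft a (α i) Ξ t)
                 + (∑ i, Pβ i t * caputoRight b (β i) Ξ t) = 0) :
    ∀ t ∈ Set.Icc a b,
      (∑ i, Dminus a b (α i) Ξ (Pα i) t)
        + (∑ i, Dplus a b (β i) Ξ (Pβ i) t) = 0 := by
  intro t ht
  rw [sum_Dminus, sum_Dplus]
  linear_combination hinv t ht - Ξ t * hEL t ht

/-- Noether's theorem for variable-order fractional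
variational problems. -/
theorem noether_variable_order
    (a b : ℝ) (hab : a < b) (n : ℕ)
    (α β : Fin n → ℝ → ℝ → ℝ)
    (hα : ∀ i t τ, a ≤ τ → τ < t → t ≤ b → 0 < α i t τ ∧ α i t τ < 1)
    (hβ : ∀ i t τ, a ≤ τ → τ < t → t ≤ b → 0 < β i t τ ∧ β i t τ < 1)
    (L : ℝ → ℝ → (Fin n → ℝ) → (Fin n → ℝ) → ℝ)
    (hL : ContDiff ℝ 1 (fun p : ℝ × ℝ × (Fin n → ℝ) × (Fin n → ℝ) =>
      L p.1 p.2.1 p.2.2.1 p.2.2.2))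
    (q : ℝ → ℝ)
    (hq : ∀ t ∈ Set.Icc a b, DifferentiableAt ℝ q t)
    (hq' : ContinuousOn (deriv q) (Set.Icc a b))
    (ξ : ℝ → ℝ → ℝ) (Ξ : ℝ → ℝ) (hΞdef : ∀ t, Ξ t = ξ t (q t))
    (hΞ : ∀ t ∈ Set.Icc a b, DifferentiableAt ℝ Ξ t)
    (hΞ' : ContinuousOn (deriv Ξ) (Set.Icc a b))
    -- partial derivatives of L along q
    (P₂ : ℝ → ℝ)
    (hP₂ : ∀ t, P₂ t = deriv (fun y => L t y
      (fun i => caputoLeft a (α i) q t) (fun i => caputoRight b (β i) q t)) (q t))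
    (Pα : Fin n → ℝ → ℝ)
    (hPα : ∀ i t, Pα i t = deriv (fun y => L t (q t)
      (Function.update (fun j => caputoLeft a (α j) q t) i y)
      (fun j => caputoRight b (β j) q t)) (caputoLeft a (α i) q t))
    (Pβ : Fin n → ℝ → ℝ)
    (hPβ : ∀ i t, Pβ i t = deriv (fun y => L t (q t)
      (fun j => caputoLeft a (α j) q t)
      (Function.update (fun j => caputoRight b (β j) q t) i y))
      (caputoRight b (β i) q t))
    -- existence of the Riemann–Liouville derivatives appearing
    (hPαI : ∀ i, AbsolutelyContinuousOn (rightRLint b (α i) (Pα i)) a b)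
    (hPβI : ∀ i, AbsolutelyContinuousOn (leftRLint a (β i) (Pβ i)) a b)
    -- the Euler–Lagrange equation along q
    (hEL : ∀ t ∈ Set.Icc a b,
      P₂ t + (∑ i, rightRLderiv b (α i) (Pα i) t)
           + (∑ i, leftRLderiv a (β i) (Pβ i) t) = 0)
    -- the invariance identity along q
    (hinv : ∀ t ∈ Set.Icc a b,
      P₂ t * Ξ t + (∑ i, Pα i t * caputoLeft a (α i) Ξ t)
                 + (∑ i, Pβ i t * caputoRight b (β i) Ξ t) = 0) :
    ∀ t ∈ Set.Icc a b,
      (∑ i, Dminus a b (α i) Ξ (Pα i) t)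
        + (∑ i, Dplus a b (β i) Ξ (Pβ i) t) = 0 :=
  noether_variable_order_general a b n α β Ξ P₂ Pα Pβ hEL hinv
end
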